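/- arXiv:2211.16069 — 3 statements merged into one kernel-verified Lean document; each statement's English description precedes it below -/
import Mathlib

section
/- Let γ ∈ (0,1) be such that 1/(1−γ) is a positive integer, and set ε = γ^{1/(1−γ)}. Then T_1(γ) = T_2(γ,ε), i.e., min{K ∈ ℕ, K ≥ 1 : (1−γ) ∑_{t=0}^{K−1} γ^t ≥ 1 − ε} = 1/(1−γ). (Paper's Proposition 3: the expected-stopping-time effective horizon T_1(γ) = 1/(1−γ) is the special case of T_2(γ,ε) at ε = γ^{1/(1−γ)}.) -/
/-- **Proposition 3.** If `1/(1-γ)` is a positive integer `N` and `ε = γ^{1/(1-γ)}`,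
then the effective horizon
`T₂(γ,ε) = min {K ∈ ℕ, K ≥ 1 : (1-γ) ∑_{t=0}^{K-1} γ^t ≥ 1-ε}`
equals `T₁(γ) = 1/(1-γ) = N`. -/
theorem effective_horizon_T1_eq_T2
    (γ : ℝ) (hγ : γ ∈ Set.Ioo (0 : ℝ) 1) (N : ℕ) (hN : (N : ℝ) = 1 / (1 - γ)) :
    IsLeast {K : ℕ | 1 ≤ K ∧
      1 - γ ^ ((1 : ℝ) / (1 - γ)) ≤ (1 - γ) * ∑ t ∈ Finset.range K, γ ^ t} N := by
  obtain ⟨h0, h1⟩ := hγ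
  have hrw : γ ^ ((1 : ℝ) / (1 - γ)) = γ ^ N := by rw [← hN, Real.rpow_natCast]
  have hsum : ∀ K : ℕ, (1 - γ) * ∑ t ∈ Finset.range K, γ ^ t = 1 - γ ^ K := by
    intro K
    rw [geom_sum_eq (ne_of_lt h1)]
    have hne : γ - 1 ≠ 0 := by linarith
    field_simp
    ring
  have hNpos : (0 : ℝ) < N := by
    rw [hN]; exact div_pos one_pos (by linarith)
  have hN1 : 1 ≤ N := by exact_mod_cast Nat.one_le_iff_ne_zero.mpr (by
    intro h; rw [h] at hNpos; simp at hNpos)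
  constructor
  · exact ⟨hN1, by rw [hsum, hrw]⟩
  · rintro K ⟨hK1, hK2⟩
    rw [hsum, hrw] at hK2
    have hpow : γ ^ K ≤ γ ^ N := by linarith
    by_contra hc
    push_neg at hc
    exact absurd hpow (not_le.mpr ((pow_lt_pow_iff_right_of_lt_one₀ h0 h1).mpr hc))
end

section
/- CVaR upper bound (Rockafellar–Uryasev inequality): let μ be a probability measure on a measurable space X, h : X → ℝ a bounded measurable function whose cumulative distribution function a ↦ μ{x : h(x) ≤ a} is continuous, and β ∈ (0,1). Define VaR(β,h,μ) = inf{a ∈ ℝ : μ{x : h(x) ≤ a} ≥ β} and CVaR(β,h,μ) = (1−β)^{−1} ∫_{{x : h(x) ≥ VaR(β,h,μ)}} h dμ. Then for every a ∈ ℝ, CVaR(β,h,μ) ≤ a + (1−β)^{−1} ∫_X max(h(x) − a, 0) dμ(x). -/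
/-! Because the cdf of `h` is continuous, it takes the value `β` exactly at `VaR β h μ` and the law
of `h` has no atoms, so the tail `{x | VaR β h μ ≤ h x}` has measure exactly `1 - β`. On any
measurable set `s`, `∫_s h = a μ(s) + ∫_s (h - a) ≤ a μ(s) + ∫ (h - a)⁺`; taking `s` to be the
tail and dividing by `1 - β` gives the bound. -/

open MeasureTheory

/-- The value at risk at level `β` of the cost `h` under the measure `μ`:
the least upper bound on `h` that holds with probability `β`. -/
noncomputable def VaR {X : Type*} [MeasurableSpace X]
    (β : ℝ) (h : X → ℝ) (μ : Measure X) : ℝ :=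
  sInf {a : ℝ | β ≤ (μ {x | h x ≤ a}).toReal}

/-- The conditional value at risk at level `β` of the cost `h` under the measure `μ`:
the expectation of `h` over its VaR-tail, normalized by `(1-β)`. -/
noncomputable def CVaR {X : Type*} [MeasurableSpace X]
    (β : ℝ) (h : X → ℝ) (μ : Measure X) : ℝ :=
  (1 - β)⁻¹ * ∫ x in {x | VaR β h μ ≤ h x}, h x ∂μ

open ProbabilityTheory Set Filter

lemma cdf_sInf_setOf_le_cdf {ν : Measure ℝ} (hc : Continuous (cdf ν)) {β : ℝ}
    (hβ : β ∈ Ioo 0 1) :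
    cdf ν (sInf {a | β ≤ cdf ν a}) = β := by
  set S := {a | β ≤ cdf ν a}
  have hS : S.Nonempty := ((tendsto_cdf_atTop ν).eventually (Ici_mem_nhds hβ.2)).exists
  obtain ⟨b, hb⟩ := eventually_atBot.1 ((tendsto_cdf_atBot ν).eventually (Iio_mem_nhds hβ.1))
  have hSbdd : BddBelow S :=
    ⟨b, fun a ha => le_of_not_gt fun hab => (hb a hab.le).not_ge ha⟩
  refine le_antisymm ?_ ((isClosed_le continuous_const hc).csInf_mem hS hSbdd)
  have hleft := (hc.tendsto (sInf S)).mono_left (nhdsWithin_le_nhds (s := Iio (sInf S)))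
  refine le_of_tendsto hleft (eventually_nhdsWithin_of_forall fun a ha => ?_)
  exact (lt_of_not_ge (notMem_of_lt_csInf (s := S) ha hSbdd)).le

section CDF

variable {ν : Measure ℝ} [IsProbabilityMeasure ν]

lemma measure_singleton_eq_zero_of_continuous_cdf (hc : Continuous (cdf ν)) (a : ℝ) :
    ν {a} = 0 := by
  rw [← measure_cdf ν, StieltjesFunction.measure_singleton,
    hc.continuousWithinAt.leftLim_eq, sub_self, ENNReal.ofReal_zero]

lemma measureReal_Ici_eq_one_sub_cdf (hc : Continuous (cdf ν)) (a : ℝ) :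
    ν.real (Ici a) = 1 - cdf ν a := by
  rw [← compl_Iio, probReal_compl_eq_one_sub measurableSet_Iio,
    measureReal_congr (Iio_ae_eq_Iic' (measure_singleton_eq_zero_of_continuous_cdf hc a)),
    cdf_eq_real]

end CDF

lemma cdf_map_eq {X : Type*} [MeasurableSpace X] {μ : Measure X} [IsProbabilityMeasure μ]
    {h : X → ℝ} (hh : Measurable h) :
    cdf (μ.map h) = fun a => (μ {x | h x ≤ a}).toReal := by
  have := Measure.isProbabilityMeasure_map (μ := μ) hh.aemeasurable
  funext a
  rw [cdf_eq_real, measureReal_def, Measure.map_apply hh measurableSet_Iic]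
  rfl

lemma setIntegral_le_mul_measureReal_add_integral_posPart {X : Type*} [MeasurableSpace X]
    {μ : Measure X} [IsFiniteMeasure μ] {f : X → ℝ} (hf : Integrable f μ) {s : Set X}
    (hs : MeasurableSet s) (a : ℝ) :
    ∫ x in s, f x ∂μ ≤ a * μ.real s + ∫ x, max (f x - a) 0 ∂μ := by
  have hfa : Integrable (fun x => f x - a) μ := hf.sub (integrable_const a)
  calc ∫ x in s, f x ∂μ = a * μ.real s + ∫ x in s, (f x - a) ∂μ := by
        rw [integral_sub hf.integrableOn (integrable_const a).integrableOn, setIntegral_const,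
          smul_eq_mul]
        ring
    _ ≤ a * μ.real s + ∫ x in s, max (f x - a) 0 ∂μ := by
        grw [setIntegral_mono_on hfa.integrableOn hfa.pos_part.integrableOn hs
          fun x _ => le_max_left _ _]
    _ ≤ a * μ.real s + ∫ x, max (f x - a) 0 ∂μ := by
        grw [setIntegral_le_integral hfa.pos_part (ae_of_all _ fun x => le_max_right _ _)]

lemma measureReal_setOf_VaR_le_eq {X : Type*} [MeasurableSpace X] {μ : Measure X}
    [IsProbabilityMeasure μ] {h : X → ℝ} (hh : Measurable h)
    (hcdf : Continuous fun a : ℝ => (μ {x | h x ≤ a}).toReal) {β : ℝ}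
    (hβ : β ∈ Ioo 0 1) :
    μ.real {x | VaR β h μ ≤ h x} = 1 - β := by
  have := Measure.isProbabilityMeasure_map (μ := μ) hh.aemeasurable
  rw [← cdf_map_eq hh] at hcdf
  have hVaR : VaR β h μ = sInf {a | β ≤ cdf (μ.map h) a} := by rw [VaR, cdf_map_eq hh]
  calc μ.real {x | VaR β h μ ≤ h x} = (μ.map h).real (Ici (VaR β h μ)) :=
        (map_measureReal_apply hh measurableSet_Ici).symm
    _ = 1 - β := by
        rw [measureReal_Ici_eq_one_sub_cdf hcdf, hVaR, cdf_sInf_setOf_le_cdf hcdf hβ]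

/-- **Rockafellar–Uryasev CVaR upper bound.**
For a probability measure `μ`, a bounded measurable cost `h` whose cdf under `μ` is continuous,
and risk level `β ∈ (0,1)`:
`CVaR(β,h,μ) ≤ a + (1-β)⁻¹ ∫ max(h(x) - a, 0) dμ` for every `a ∈ ℝ`. -/
theorem cvar_le_rockafellar_uryasev_bound
    {X : Type*} [MeasurableSpace X] (μ : Measure X) [IsProbabilityMeasure μ]
    (h : X → ℝ) (hh : Measurable h) (M : ℝ) (hM : ∀ x, |h x| ≤ M)
    (hcdf : Continuous fun a : ℝ => (μ {x | h x ≤ a}).toReal)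
    (β : ℝ) (hβ : β ∈ Set.Ioo (0 : ℝ) 1) :
    ∀ a : ℝ, CVaR β h μ ≤ a + (1 - β)⁻¹ * ∫ x, max (h x - a) 0 ∂μ := by
  intro a
  have hint : Integrable h μ := Integrable.of_bound hh.aestronglyMeasurable M (ae_of_all _ hM)
  have htail := setIntegral_le_mul_measureReal_add_integral_posPart hint
    (measurableSet_le (measurable_const (a := VaR β h μ)) hh) a
  rw [measureReal_setOf_VaR_le_eq hh hcdf hβ] at htail
  have hβ' : 0 < 1 - β := sub_pos.2 hβ.2
  calc CVaR β h μ ≤ (1 - β)⁻¹ * (a * (1 - β) + ∫ x, max (h x - a) 0 ∂μ) := by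
        rw [CVaR]; gcongr
    _ = a + (1 - β)⁻¹ * ∫ x, max (h x - a) 0 ∂μ := by field_simp
end

section
/- Near-term CVaR (discounted CVaR constraint): let C : X → ℝ be bounded measurable, β ∈ (0,1), α ≥ 0, and δ ∈ ℝ. Let μ_γ be the occupation density and assume the cdf of C under the probability measure with density μ_γ (w.r.t. ν) is continuous. If the expected discounted sum of clipped violations satisfies (1−γ) ∑_{t=0}^∞ γ^t ∫_X max(C(x) − α, 0) p_t(x) dν(x) ≤ δ, then CVaR(β, C, μ_γ) ≤ α + (1−β)^{−1} δ. (Paper's Proposition 5.) -/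
open MeasureTheory

/-! The occupation measure is the mixture `∑ₜ (1 - γ) γ ^ t • p_t ν`: its total mass is `1`, so its
density is finite `ν`-a.e. and integrals against it are the discounted sums of the integrals
against the `p_t ν`. Hence it is a probability measure and the hypothesis reads
`∫ (C - α)⁺ dμ_γ ≤ δ`. Continuity of the cdf gives the tail `{C ≥ VaR}` mass exactly `1 - β`, and
there `C ≤ (C - α)⁺ + α`, so `(1 - β) CVaR ≤ δ + (1 - β) α`. -/

open Filter Topology ProbabilityTheory
open scoped ENNReal

section ValueAtRisk

variable {X : Type*} [MeasurableSpace X] {μ : Measure X} [IsProbabilityMeasure μ]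
  {h : X → ℝ} {β : ℝ}

lemma toReal_measure_setOf_le_eq_cdf_map (hh : Measurable h) (a : ℝ) :
    (μ {x | h x ≤ a}).toReal = cdf (μ.map h) a := by
  have := Measure.isProbabilityMeasure_map (μ := μ) hh.aemeasurable
  rw [cdf_eq_real, measureReal_def, Measure.map_apply hh measurableSet_Iic]
  rfl

lemma bddBelow_setOf_le_toReal_measure (hh : Measurable h) (hβ0 : 0 < β) :
    BddBelow {a : ℝ | β ≤ (μ {x | h x ≤ a}).toReal} := by
  obtain ⟨a₀, ha₀⟩ :=
    eventually_atBot.1 ((tendsto_cdf_atBot (μ := μ.map h)).eventually (gt_mem_nhds hβ0))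
  refine ⟨a₀, fun a ha => le_of_not_ge fun hle => ?_⟩
  have := ha₀ a hle
  rw [Set.mem_ofPred_eq, toReal_measure_setOf_le_eq_cdf_map hh] at ha
  linarith

lemma nonempty_setOf_le_toReal_measure (hh : Measurable h) (hβ1 : β < 1) :
    {a : ℝ | β ≤ (μ {x | h x ≤ a}).toReal}.Nonempty := by
  obtain ⟨a, ha⟩ :=
    ((tendsto_cdf_atTop (μ := μ.map h)).eventually (lt_mem_nhds hβ1)).exists
  exact ⟨a, by rw [Set.mem_ofPred_eq, toReal_measure_setOf_le_eq_cdf_map hh]; exact ha.le⟩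

lemma toReal_measure_setOf_le_VaR (hh : Measurable h) (hβ0 : 0 < β) (hβ1 : β < 1)
    (hcdf : Continuous fun a : ℝ => (μ {x | h x ≤ a}).toReal) :
    (μ {x | h x ≤ VaR β h μ}).toReal = β := by
  have hbdd := bddBelow_setOf_le_toReal_measure (μ := μ) hh hβ0
  refine le_antisymm ?_
    ((isClosed_le continuous_const hcdf).csInf_mem (nonempty_setOf_le_toReal_measure hh hβ1) hbdd)
  have hleft : Tendsto (fun a : ℝ => (μ {x | h x ≤ a}).toReal) (𝓝[<] VaR β h μ) (𝓝 _) :=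
    (hcdf.tendsto _).mono_left nhdsWithin_le_nhds
  refine le_of_tendsto hleft (eventually_nhdsWithin_of_forall fun a (ha : a < VaR β h μ) => ?_)
  have hnotMem := notMem_of_lt_csInf ha hbdd
  exact (lt_of_not_ge hnotMem).le

lemma toReal_measure_setOf_lt_VaR (hh : Measurable h) (hβ0 : 0 < β) (hβ1 : β < 1)
    (hcdf : Continuous fun a : ℝ => (μ {x | h x ≤ a}).toReal) :
    (μ {x | h x < VaR β h μ}).toReal = β := by
  have hVaR := toReal_measure_setOf_le_VaR hh hβ0 hβ1 hcdf
  refine le_antisymm ((measureReal_mono fun x (hx : h x < _) => hx.le).trans_eq hVaR) ?_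
  have hleft : Tendsto (fun a : ℝ => (μ {x | h x ≤ a}).toReal) (𝓝[<] VaR β h μ) (𝓝 _) :=
    (hcdf.tendsto _).mono_left nhdsWithin_le_nhds
  rw [hVaR] at hleft
  refine le_of_tendsto hleft (eventually_nhdsWithin_of_forall fun a ha => ?_)
  exact measureReal_mono fun x (hx : h x ≤ a) => hx.trans_lt ha

lemma toReal_measure_VaR_le (hh : Measurable h) (hβ0 : 0 < β) (hβ1 : β < 1)
    (hcdf : Continuous fun a : ℝ => (μ {x | h x ≤ a}).toReal) :
    (μ {x | VaR β h μ ≤ h x}).toReal = 1 - β := by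
  have hcompl : {x | VaR β h μ ≤ h x} = {x | h x < VaR β h μ}ᶜ := by
    ext x; simp
  rw [hcompl, ← measureReal_def, probReal_compl_eq_one_sub (measurableSet_lt hh measurable_const),
    measureReal_def, toReal_measure_setOf_lt_VaR hh hβ0 hβ1 hcdf]

end ValueAtRisk

lemma CVaR_le_of_integral_max_sub_le {X : Type*} [MeasurableSpace X] {μ : Measure X}
    [IsFiniteMeasure μ] {h : X → ℝ} {β : ℝ} (α δ : ℝ) (hβ1 : β < 1) (hint : Integrable h μ)
    (htail : (μ {x | VaR β h μ ≤ h x}).toReal = 1 - β)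
    (hδ : ∫ x, max (h x - α) 0 ∂μ ≤ δ) :
    CVaR β h μ ≤ α + (1 - β)⁻¹ * δ := by
  set S := {x | VaR β h μ ≤ h x}
  have hviol : Integrable (fun x => max (h x - α) 0) μ := (hint.sub (integrable_const α)).pos_part
  have htail_int : ∫ x in S, h x ∂μ ≤ δ + (1 - β) * α := calc
    ∫ x in S, h x ∂μ ≤ ∫ x in S, (max (h x - α) 0 + α) ∂μ :=
      setIntegral_mono hint.integrableOn (hviol.add (integrable_const α)).integrableOn
        fun x => by linarith [le_max_left (h x - α) 0]
    _ = ∫ x in S, max (h x - α) 0 ∂μ + (1 - β) * α := by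
      rw [integral_add hviol.integrableOn (integrable_const α).integrableOn, setIntegral_const,
        measureReal_def, htail, smul_eq_mul]
    _ ≤ δ + (1 - β) * α := by
      gcongr
      exact (setIntegral_le_integral hviol (ae_of_all _ fun x => le_max_right _ _)).trans hδ
  have h1β : 0 < 1 - β := by linarith
  calc CVaR β h μ ≤ (1 - β)⁻¹ * (δ + (1 - β) * α) := by
        rw [CVaR]; gcongr
    _ = α + (1 - β)⁻¹ * δ := by field_simp; ring

lemma withDensity_ofReal_tsum {X : Type*} [MeasurableSpace X] {ν : Measure X}
    {f : ℕ → X → ℝ} (hf : ∀ t, Measurable (f t)) (hf0 : ∀ t x, 0 ≤ f t x)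
    (hfin : ∫⁻ x, ∑' t, ENNReal.ofReal (f t x) ∂ν ≠ ∞) :
    ν.withDensity (fun x => ENNReal.ofReal (∑' t, f t x))
      = Measure.sum fun t => ν.withDensity fun x => ENNReal.ofReal (f t x) := by
  have hfm : ∀ t, Measurable fun x => ENNReal.ofReal (f t x) := fun t => (hf t).ennreal_ofReal
  -- a divergent real series has `∑' = 0`; `hfin` rules this out `ν`-a.e.
  have hae : ∀ᵐ x ∂ν, ENNReal.ofReal (∑' t, f t x) = ∑' t, ENNReal.ofReal (f t x) := by
    filter_upwards [ae_lt_top (Measurable.tsum hfm) hfin] with x hx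
    refine ENNReal.ofReal_tsum_of_nonneg (hf0 · x) ?_
    simpa only [ENNReal.toReal_ofReal (hf0 _ x)] using ENNReal.summable_toReal hx.ne
  rw [withDensity_congr_ae hae, ← withDensity_tsum hfm]
  congr 1
  funext x
  rw [ENNReal.tsum_apply]

lemma lintegral_ofReal_mul_of_integral_eq_one {X : Type*} [MeasurableSpace X] {ν : Measure X}
    {f : X → ℝ} (hf : Measurable f) (hf0 : ∀ x, 0 ≤ f x) (hf1 : ∫ x, f x ∂ν = 1) {c : ℝ}
    (hc : 0 ≤ c) :
    ∫⁻ x, ENNReal.ofReal (c * f x) ∂ν = ENNReal.ofReal c := by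
  simp_rw [ENNReal.ofReal_mul hc]
  rw [lintegral_const_mul _ hf.ennreal_ofReal, ← ofReal_integral_eq_lintegral_ofReal
    (Integrable.of_integral_ne_zero (by simp [hf1])) (ae_of_all _ hf0), hf1,
    ENNReal.ofReal_one, mul_one]

noncomputable def occupationMeasure {X : Type*} [MeasurableSpace X] (ν : Measure X) (γ : ℝ)
    (p : ℕ → X → ℝ) : Measure X :=
  ν.withDensity fun x => ENNReal.ofReal ((1 - γ) * ∑' t : ℕ, γ ^ t * p t x)

section OccupationMeasure

variable {X : Type*} [MeasurableSpace X] {ν : Measure X} {γ : ℝ} {p : ℕ → X → ℝ}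

lemma tsum_ofReal_one_sub_mul_pow (hγ0 : 0 ≤ γ) (hγ1 : γ < 1) :
    ∑' t : ℕ, ENNReal.ofReal ((1 - γ) * γ ^ t) = 1 := by
  have hsum := (hasSum_geometric_of_lt_one hγ0 hγ1).mul_left (1 - γ)
  rw [← ENNReal.ofReal_tsum_of_nonneg (fun t => by have := pow_nonneg hγ0 t; nlinarith)
    hsum.summable, hsum.tsum_eq, mul_inv_cancel₀ (by linarith), ENNReal.ofReal_one]

lemma tsum_lintegral_ofReal_one_sub_mul_pow_mul (hγ0 : 0 ≤ γ) (hγ1 : γ < 1)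
    (hmeas : ∀ t, Measurable (p t)) (hnonneg : ∀ t x, 0 ≤ p t x)
    (hint : ∀ t, ∫ x, p t x ∂ν = 1) :
    ∑' t : ℕ, ∫⁻ x, ENNReal.ofReal ((1 - γ) * γ ^ t * p t x) ∂ν = 1 := by
  rw [← tsum_ofReal_one_sub_mul_pow hγ0 hγ1]
  exact tsum_congr fun t => lintegral_ofReal_mul_of_integral_eq_one (hmeas t) (hnonneg t) (hint t)
    (mul_nonneg (by linarith) (pow_nonneg hγ0 t))

lemma occupationMeasure_eq_sum (hγ0 : 0 ≤ γ) (hγ1 : γ < 1) (hmeas : ∀ t, Measurable (p t))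
    (hnonneg : ∀ t x, 0 ≤ p t x) (hint : ∀ t, ∫ x, p t x ∂ν = 1) :
    occupationMeasure ν γ p
      = Measure.sum fun t => ν.withDensity fun x => ENNReal.ofReal ((1 - γ) * γ ^ t * p t x) := by
  rw [occupationMeasure]
  simp_rw [← tsum_mul_left, ← mul_assoc]
  refine withDensity_ofReal_tsum (fun t => (hmeas t).const_mul _)
    (fun t x => mul_nonneg (mul_nonneg (by linarith) (pow_nonneg hγ0 t)) (hnonneg t x)) ?_
  rw [lintegral_tsum fun t => ((hmeas t).const_mul _).ennreal_ofReal.aemeasurable,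
    tsum_lintegral_ofReal_one_sub_mul_pow_mul hγ0 hγ1 hmeas hnonneg hint]
  exact ENNReal.one_ne_top

lemma isProbabilityMeasure_occupationMeasure (hγ0 : 0 ≤ γ) (hγ1 : γ < 1)
    (hmeas : ∀ t, Measurable (p t)) (hnonneg : ∀ t x, 0 ≤ p t x)
    (hint : ∀ t, ∫ x, p t x ∂ν = 1) :
    IsProbabilityMeasure (occupationMeasure ν γ p) := by
  constructor
  rw [occupationMeasure_eq_sum hγ0 hγ1 hmeas hnonneg hint, Measure.sum_apply _ MeasurableSet.univ]
  simp_rw [withDensity_apply _ MeasurableSet.univ, Measure.restrict_univ]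
  exact tsum_lintegral_ofReal_one_sub_mul_pow_mul hγ0 hγ1 hmeas hnonneg hint

lemma integral_occupationMeasure (hγ0 : 0 ≤ γ) (hγ1 : γ < 1)
    (hmeas : ∀ t, Measurable (p t)) (hnonneg : ∀ t x, 0 ≤ p t x)
    (hint : ∀ t, ∫ x, p t x ∂ν = 1) {g : X → ℝ} (hg : Integrable g (occupationMeasure ν γ p)) :
    ∫ x, g x ∂occupationMeasure ν γ p = (1 - γ) * ∑' t : ℕ, γ ^ t * ∫ x, g x * p t x ∂ν := by
  rw [occupationMeasure_eq_sum hγ0 hγ1 hmeas hnonneg hint] at hg ⊢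
  rw [integral_sum_measure hg, ← tsum_mul_left]
  congr 1
  funext t
  rw [integral_withDensity_eq_integral_toReal_smul ((hmeas t).const_mul _).ennreal_ofReal
    (ae_of_all _ fun _ => ENNReal.ofReal_lt_top), ← mul_assoc, ← integral_const_mul]
  congr 1
  funext x
  rw [ENNReal.toReal_ofReal (mul_nonneg (mul_nonneg (by linarith) (pow_nonneg hγ0 t))
    (hnonneg t x)), smul_eq_mul]
  ring

end OccupationMeasure

theorem discounted_cvar_constraint_general
    {X : Type*} [MeasurableSpace X] (ν : Measure X)
    (γ : ℝ) (hγ : γ ∈ Set.Ioo (0 : ℝ) 1)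
    (p : ℕ → X → ℝ)
    (hmeas : ∀ t, Measurable (p t))
    (hnonneg : ∀ t x, 0 ≤ p t x)
    (hint : ∀ t, ∫ x, p t x ∂ν = 1)
    (C : X → ℝ) (hC : Measurable C) (B : ℝ) (hCB : ∀ x, |C x| ≤ B)
    (β : ℝ) (hβ : β ∈ Set.Ioo (0 : ℝ) 1)
    (α : ℝ) (δ : ℝ)
    (hcdf : Continuous fun a : ℝ =>
      ((ν.withDensity fun x => ENNReal.ofReal ((1 - γ) * ∑' t : ℕ, γ ^ t * p t x))
        {x | C x ≤ a}).toReal)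
    (hsum : (1 - γ) * ∑' t : ℕ, γ ^ t * ∫ x, max (C x - α) 0 * p t x ∂ν ≤ δ) :
    CVaR β C (ν.withDensity fun x => ENNReal.ofReal ((1 - γ) * ∑' t : ℕ, γ ^ t * p t x))
      ≤ α + (1 - β)⁻¹ * δ := by
  obtain ⟨hγ0, hγ1⟩ := hγ
  obtain ⟨hβ0, hβ1⟩ := hβ
  change CVaR β C (occupationMeasure ν γ p) ≤ _
  have := isProbabilityMeasure_occupationMeasure hγ0.le hγ1 hmeas hnonneg hint
  have hCint : Integrable C (occupationMeasure ν γ p) :=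
    .of_bound hC.aestronglyMeasurable B (ae_of_all _ hCB)
  refine CVaR_le_of_integral_max_sub_le α δ hβ1 hCint
    (toReal_measure_VaR_le hC hβ0 hβ1 hcdf) ?_
  rwa [integral_occupationMeasure hγ0.le hγ1 hmeas hnonneg hint
    (g := fun x => max (C x - α) 0) (hCint.sub (integrable_const α)).pos_part]

/-- **Proposition 5 (near-term CVaR / discounted CVaR constraint).**
If the expected discounted sum of clipped constraint violations is at most `δ`, then the CVaR
of the constraint function `C` under the occupation measure (the measure with density
`μ_γ(x) = (1-γ) ∑ₜ γ^t p_t(x)` w.r.t. `ν`) is at most `α + (1-β)⁻¹ δ`. -/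
theorem discounted_cvar_constraint
    {X : Type*} [MeasurableSpace X] (ν : Measure X)
    (γ : ℝ) (hγ : γ ∈ Set.Ioo (0 : ℝ) 1)
    (p : ℕ → X → ℝ) (M : ℝ)
    (hmeas : ∀ t, Measurable (p t))
    (hnonneg : ∀ t x, 0 ≤ p t x)
    (hbdd : ∀ t x, p t x ≤ M)
    (hint : ∀ t, ∫ x, p t x ∂ν = 1)
    (C : X → ℝ) (hC : Measurable C) (B : ℝ) (hCB : ∀ x, |C x| ≤ B)
    (β : ℝ) (hβ : β ∈ Set.Ioo (0 : ℝ) 1)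
    (α : ℝ) (hα : 0 ≤ α) (δ : ℝ)
    (hcdf : Continuous fun a : ℝ =>
      ((ν.withDensity fun x => ENNReal.ofReal ((1 - γ) * ∑' t : ℕ, γ ^ t * p t x))
        {x | C x ≤ a}).toReal)
    (hsum : (1 - γ) * ∑' t : ℕ, γ ^ t * ∫ x, max (C x - α) 0 * p t x ∂ν ≤ δ) :
    CVaR β C (ν.withDensity fun x => ENNReal.ofReal ((1 - γ) * ∑' t : ℕ, γ ^ t * p t x))
      ≤ α + (1 - β)⁻¹ * δ :=
  discounted_cvar_constraint_general ν γ hγ p hmeas hnonneg hint C hC B hCB β hβ α δ hcdf hsum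
end
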